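/- For distinct points x, y in ℝ^d, positive exponents α, β in (0,d) with α+β=d, and λ>0, there is a constant C such that ∫_{ℝ^d} e^{-λ|z-x|}|z-x|^{-α} e^{-λ|z-y|}|z-y|^{-β} dz ≤ C e^{-λ|x-y|}(|log|x-y||+1). -/

import Mathlib

open MeasureTheory Real

open Set Metric intervalIntegral
open scoped ENNReal NNReal

lemma lint_Ioc_rpow {R p : ℝ} (hR : 0 < R) (hp : -1 < p) :
    ∫⁻ s in Ioc (0:ℝ) R, ENNReal.ofReal (s ^ p) = ENNReal.ofReal (R ^ (p+1) / (p+1)) := by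
  rw [← ofReal_integral_eq_lintegral_ofReal]
  · congr 1
    rw [← intervalIntegral.integral_of_le hR.le,
      integral_rpow (Or.inl hp),
      Real.zero_rpow (by linarith : p + 1 ≠ 0)]
    ring
  · exact (intervalIntegrable_iff_integrableOn_Ioc_of_le hR.le).mp
      (intervalIntegral.intervalIntegrable_rpow' hp)
  · filter_upwards [ae_restrict_mem measurableSet_Ioc] with s hs
    exact Real.rpow_nonneg hs.1.le p

lemma lint_Ioc_inv {a b : ℝ} (ha : 0 < a) (hab : a ≤ b) :
    ∫⁻ s in Ioc a b, ENNReal.ofReal s⁻¹ = ENNReal.ofReal (Real.log (b / a)) := by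
  have hb : 0 < b := lt_of_lt_of_le ha hab
  have hne : ∀ x ∈ Set.uIcc a b, x ≠ 0 := by
    intro x hx
    rw [Set.uIcc_of_le hab] at hx
    have : 0 < x := lt_of_lt_of_le ha hx.1
    exact this.ne'
  have h0 : (0:ℝ) ∉ Set.uIcc a b := fun h => hne 0 h rfl
  rw [← ofReal_integral_eq_lintegral_ofReal]
  · congr 1
    rw [← intervalIntegral.integral_of_le hab, integral_inv h0]
  · exact (intervalIntegrable_iff_integrableOn_Ioc_of_le hab).mp
      (intervalIntegrable_inv hne continuousOn_id)
  · filter_upwards [ae_restrict_mem measurableSet_Ioc] with s hs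
    exact inv_nonneg.2 (lt_of_lt_of_le ha hs.1.le).le

lemma lint_Ioi_exp {c : ℝ} (T : ℝ) (hc : 0 < c) :
    ∫⁻ s in Ioi T, ENNReal.ofReal (Real.exp (-c * s)) = ENNReal.ofReal (Real.exp (-c * T) / c) := by
  rw [← ofReal_integral_eq_lintegral_ofReal (exp_neg_integrableOn_Ioi T hc)
    (Filter.Eventually.of_forall fun s => (Real.exp_pos _).le)]
  congr 1
  have h := integral_comp_mul_left_Ioi (fun x => Real.exp (-x)) T hc
  simp only [← neg_mul] at h
  rw [h, integral_exp_neg_Ioi, smul_eq_mul, neg_mul, div_eq_inv_mul]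

lemma lintegral_norm_eq (d : ℕ) (hd : 1 ≤ d) (g : ℝ → ℝ≥0∞) (hg : Measurable g) :
    ∫⁻ x : EuclideanSpace ℝ (Fin d), g ‖x‖ =
      ((d : ℝ≥0∞) * volume (Metric.ball (0 : EuclideanSpace ℝ (Fin d)) 1)) *
        ∫⁻ s in Ioi (0:ℝ), ENNReal.ofReal (s ^ (d-1)) * g s := by
  haveI : Nonempty (Fin d) := ⟨⟨0, hd⟩⟩
  haveI : Nontrivial (EuclideanSpace ℝ (Fin d)) := inferInstance
  have hdim : Module.finrank ℝ (EuclideanSpace ℝ (Fin d)) = d := finrank_euclideanSpace_fin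
  calc ∫⁻ x : EuclideanSpace ℝ (Fin d), g ‖x‖
      = ∫⁻ x in ({0}ᶜ : Set (EuclideanSpace ℝ (Fin d))), g ‖x‖ := by
        rw [restrict_compl_singleton]
    _ = ∫⁻ x : ({0}ᶜ : Set (EuclideanSpace ℝ (Fin d))), g ‖(x : EuclideanSpace ℝ (Fin d))‖
          ∂(volume.comap Subtype.val) :=
        (lintegral_subtype_comap (measurableSet_singleton 0).compl _).symm
    _ = ∫⁻ p : sphere (0:EuclideanSpace ℝ (Fin d)) 1 × Ioi (0:ℝ), g p.2
          ∂((volume.toSphere).prod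
            (Measure.volumeIoiPow (Module.finrank ℝ (EuclideanSpace ℝ (Fin d)) - 1))) :=
        by have h := (Measure.measurePreserving_homeomorphUnitSphereProd (volume : Measure (EuclideanSpace ℝ (Fin d)))).lintegral_comp
             (hg.comp (measurable_subtype_coe.comp measurable_snd))
           simpa only [Function.comp_apply, homeomorphUnitSphereProd_apply_snd_coe] using h
    _ = ((d : ℝ≥0∞) * volume (Metric.ball (0:EuclideanSpace ℝ (Fin d)) 1)) *
          ∫⁻ y : Ioi (0:ℝ), g y
          ∂(Measure.volumeIoiPow (Module.finrank ℝ (EuclideanSpace ℝ (Fin d)) - 1)) := by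
        rw [lintegral_prod (fun p : ↑(sphere (0:EuclideanSpace ℝ (Fin d)) 1) × ↑(Ioi (0:ℝ)) => g ↑p.2)
          ((hg.comp (measurable_subtype_coe.comp measurable_snd)).aemeasurable)]
        simp [lintegral_const, hdim, mul_comm]
    _ = ((d : ℝ≥0∞) * volume (Metric.ball (0:EuclideanSpace ℝ (Fin d)) 1)) *
          ∫⁻ s in Ioi (0:ℝ), ENNReal.ofReal (s ^ (d-1)) * g s := by
        congr 1
        rw [hdim, Measure.volumeIoiPow,
          lintegral_withDensity_eq_lintegral_mul (Measure.comap Subtype.val volume)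
            (f := fun r : ↥(Ioi (0:ℝ)) => ENNReal.ofReal ((r:ℝ) ^ (d-1)))
            (g := fun y : ↥(Ioi (0:ℝ)) => g ↑y)
            ((measurable_subtype_coe.pow_const _).ennreal_ofReal)
            (hg.comp measurable_subtype_coe)]
        simp only [Pi.mul_apply]
        exact lintegral_subtype_comap measurableSet_Ioi
          (fun s => ENNReal.ofReal (s ^ (d-1)) * g s)

lemma oned_A {d : ℕ} (hd : 1 ≤ d) {α β R : ℝ} (hα : 0 < α) (hβ : 0 < β)
    (hαβ : α + β = (d:ℝ)) (hR : 0 < R) :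
    ∫⁻ s in Ioi (0:ℝ), ENNReal.ofReal (s ^ (d-1)) *
      (if s ≤ R then ENNReal.ofReal (R ^ (-β) * s ^ (-α)) else 0)
      = ENNReal.ofReal (R ^ (-β)) * ENNReal.ofReal (R ^ β / β) := by
  have hcongr : ∀ s ∈ Ioi (0:ℝ), ENNReal.ofReal (s ^ (d-1)) *
      (if s ≤ R then ENNReal.ofReal (R ^ (-β) * s ^ (-α)) else 0)
      = (Ioc (0:ℝ) R).indicator
          (fun s => ENNReal.ofReal (R ^ (-β)) * ENNReal.ofReal (s ^ (β-1))) s := by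
    intro s hs
    have hs0 : (0:ℝ) < s := hs
    by_cases hsR : s ≤ R
    · rw [if_pos hsR, indicator_of_mem (mem_Ioc.mpr ⟨hs0, hsR⟩)]
      rw [← ENNReal.ofReal_mul (by positivity)]
      rw [← ENNReal.ofReal_mul (by positivity)]
      congr 1
      have h1 : (s:ℝ) ^ (d-1) = s ^ ((d:ℝ) - 1) := by
        rw [← Real.rpow_natCast s (d-1), Nat.cast_sub hd, Nat.cast_one]
      rw [h1, ← mul_assoc, mul_comm (s ^ ((d:ℝ)-1)) (R ^ (-β)), mul_assoc]
      congr 1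
      rw [← Real.rpow_add hs0]
      congr 1
      linarith
    · rw [if_neg hsR, indicator_of_notMem (fun h => hsR (mem_Ioc.mp h).2), mul_zero]
  rw [setLIntegral_congr_fun measurableSet_Ioi hcongr,
    setLIntegral_indicator measurableSet_Ioc]
  have hset : Ioc (0:ℝ) R ∩ Ioi 0 = Ioc 0 R := by
    rw [inter_eq_left]; exact fun t ht => ht.1
  rw [hset, lintegral_const_mul' _ _ ENNReal.ofReal_ne_top]
  congr 1
  have := lint_Ioc_rpow hR (by linarith : (-1:ℝ) < β - 1)
  rw [this]
  norm_num

lemma oned_C {d : ℕ} (hd : 1 ≤ d) {r ν : ℝ} (hr : 0 < r) (hν : 0 < ν) :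
    ∫⁻ s in Ioi (0:ℝ), ENNReal.ofReal (s ^ (d-1)) *
      (if r/2 < s then ENNReal.ofReal (Real.exp (ν*r - 2*ν*s) * s ^ (-(d:ℝ))) else 0)
      ≤ ENNReal.ofReal (Real.log 4 + |Real.log r|) + ENNReal.ofReal (1/(2*ν)) := by
  have hr2 : 0 < r/2 := by linarith
  have hcongr : ∀ s ∈ Ioi (0:ℝ), ENNReal.ofReal (s ^ (d-1)) *
      (if r/2 < s then ENNReal.ofReal (Real.exp (ν*r - 2*ν*s) * s ^ (-(d:ℝ))) else 0)
      = (Ioi (r/2)).indicator (fun s => ENNReal.ofReal (Real.exp (ν*r - 2*ν*s) * s⁻¹)) s := by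
    intro s hs
    have hs0 : (0:ℝ) < s := hs
    by_cases hsr : r/2 < s
    · rw [if_pos hsr, indicator_of_mem (mem_Ioi.mpr hsr)]
      rw [← ENNReal.ofReal_mul (by positivity)]
      congr 1
      have h1 : (s:ℝ) ^ (d-1) = s ^ ((d:ℝ) - 1) := by
        rw [← Real.rpow_natCast s (d-1), Nat.cast_sub hd, Nat.cast_one]
      rw [h1, ← mul_assoc, mul_comm (s ^ ((d:ℝ)-1)) (Real.exp (ν*r - 2*ν*s)), mul_assoc]
      congr 1
      rw [← Real.rpow_add hs0, ← Real.rpow_neg_one s]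
      congr 1
      ring
    · rw [if_neg hsr, indicator_of_notMem (fun h => hsr (mem_Ioi.mp h)), mul_zero]
  rw [setLIntegral_congr_fun measurableSet_Ioi hcongr,
    setLIntegral_indicator measurableSet_Ioi]
  have hset : Ioi (r/2) ∩ Ioi (0:ℝ) = Ioi (r/2) := by
    rw [inter_eq_left]; exact fun t ht => lt_trans hr2 ht
  rw [hset, ← Ioc_union_Ioi_eq_Ioi (by linarith : r/2 ≤ r/2 + 1),
    lintegral_union measurableSet_Ioi (Ioc_disjoint_Ioi le_rfl)]
  gcongr
  · -- K1
    calc ∫⁻ s in Ioc (r/2) (r/2+1), ENNReal.ofReal (Real.exp (ν*r - 2*ν*s) * s⁻¹)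
        ≤ ∫⁻ s in Ioc (r/2) (r/2+1), ENNReal.ofReal s⁻¹ := by
          apply setLIntegral_mono' measurableSet_Ioc
          intro s hs
          apply ENNReal.ofReal_le_ofReal
          have h1 : Real.exp (ν*r - 2*ν*s) ≤ 1 := by
            rw [Real.exp_le_one_iff]
            nlinarith [hs.1]
          have h2 : (0:ℝ) ≤ s⁻¹ := by
            have := lt_trans hr2 hs.1; positivity
          calc Real.exp (ν*r - 2*ν*s) * s⁻¹ ≤ 1 * s⁻¹ := by gcongr
            _ = s⁻¹ := one_mul _
      _ = ENNReal.ofReal (Real.log ((r/2+1)/(r/2))) := lint_Ioc_inv hr2 (by linarith)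
      _ ≤ ENNReal.ofReal (Real.log 4 + |Real.log r|) := by
          apply ENNReal.ofReal_le_ofReal
          have hkey : (r/2+1)/(r/2) = (r+2)/r := by
            field_simp
          rw [hkey, Real.log_div (by linarith) (ne_of_gt hr)]
          rcases le_or_gt 1 r with h1 | h1
          · have h2 : Real.log r ≤ |Real.log r| := le_abs_self _
            have h3 : Real.log (r+2) ≤ Real.log 4 + 2 * Real.log r := by
              have : Real.log 4 + 2 * Real.log r = Real.log (4 * r^2) := by
                rw [Real.log_mul (by norm_num) (by positivity), Real.log_pow]
                push_cast; ring
              rw [this]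
              apply Real.log_le_log (by linarith)
              nlinarith
            linarith
          · have h2 : -Real.log r ≤ |Real.log r| := neg_le_abs _
            have h3 : Real.log (r+2) ≤ Real.log 4 :=
              Real.log_le_log (by linarith) (by linarith)
            linarith
  · -- K2
    calc ∫⁻ s in Ioi (r/2+1), ENNReal.ofReal (Real.exp (ν*r - 2*ν*s) * s⁻¹)
        ≤ ∫⁻ s in Ioi (r/2+1), ENNReal.ofReal (Real.exp (ν*r)) * ENNReal.ofReal (Real.exp (-(2*ν) * s)) := by
          apply setLIntegral_mono' measurableSet_Ioi
          intro s hs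
          rw [← ENNReal.ofReal_mul (Real.exp_pos _).le, ← Real.exp_add]
          apply ENNReal.ofReal_le_ofReal
          have hs1 : (1:ℝ) ≤ s := by have := hs.out; linarith
          have h2 : s⁻¹ ≤ 1 := by
            rw [inv_le_one_iff₀]; right; exact hs1
          calc Real.exp (ν*r - 2*ν*s) * s⁻¹ ≤ Real.exp (ν*r - 2*ν*s) * 1 := by
                gcongr <;> exact (Real.exp_pos _).le
            _ = Real.exp (ν*r + -(2*ν)*s) := by rw [mul_one]; congr 1; ring
      _ = ENNReal.ofReal (Real.exp (ν*r)) * ENNReal.ofReal (Real.exp (-(2*ν) * (r/2+1)) / (2*ν)) := by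
          rw [lintegral_const_mul' _ _ ENNReal.ofReal_ne_top, lint_Ioi_exp _ (by linarith)]
      _ ≤ ENNReal.ofReal (1/(2*ν)) := by
          rw [← ENNReal.ofReal_mul (Real.exp_pos _).le]
          apply ENNReal.ofReal_le_ofReal
          rw [mul_div_assoc', ← Real.exp_add]
          have : Real.exp (ν*r + -(2*ν) * (r/2+1)) ≤ 1 := by
            rw [Real.exp_le_one_iff]; nlinarith
          rw [div_le_div_iff₀ (by positivity) (by positivity)] <;> nlinarith [this, hν]

lemma pointwise_bound {d : ℕ} {α β ν r a b : ℝ} (hα : 0 < α) (hβ : 0 < β)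
    (hαβ : α + β = (d:ℝ)) (hν : 0 < ν) (hr : 0 < r) (ha : 0 ≤ a) (hb : 0 ≤ b)
    (htri : r ≤ a + b) :
    ENNReal.ofReal (Real.exp (-ν*a) * a ^ (-α) * (Real.exp (-ν*b) * b ^ (-β)))
      ≤ ENNReal.ofReal (Real.exp (-ν*r)) *
        ((if a ≤ r/2 then ENNReal.ofReal ((r/2) ^ (-β) * a ^ (-α)) else 0)
        + (if b ≤ r/2 then ENNReal.ofReal ((r/2) ^ (-α) * b ^ (-β)) else 0)
        + (if r/2 < a then ENNReal.ofReal (Real.exp (ν*r-2*ν*a) * a ^ (-(d:ℝ))) else 0)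
        + (if r/2 < b then ENNReal.ofReal (Real.exp (ν*r-2*ν*b) * b ^ (-(d:ℝ))) else 0)) := by
  have hr2 : 0 < r/2 := by linarith
  set t1 := (if a ≤ r/2 then ENNReal.ofReal ((r/2) ^ (-β) * a ^ (-α)) else 0) with ht1
  set t2 := (if b ≤ r/2 then ENNReal.ofReal ((r/2) ^ (-α) * b ^ (-β)) else 0) with ht2
  set t3 := (if r/2 < a then ENNReal.ofReal (Real.exp (ν*r-2*ν*a) * a ^ (-(d:ℝ))) else 0) with ht3
  set t4 := (if r/2 < b then ENNReal.ofReal (Real.exp (ν*r-2*ν*b) * b ^ (-(d:ℝ))) else 0) with ht4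
  by_cases hA : a ≤ r/2
  · -- case A
    have hb2 : r/2 ≤ b := by linarith
    have key : Real.exp (-ν*a) * a ^ (-α) * (Real.exp (-ν*b) * b ^ (-β))
        ≤ Real.exp (-ν*r) * ((r/2) ^ (-β) * a ^ (-α)) := by
      have e1 : Real.exp (-ν*b) ≤ Real.exp (-ν*(r-a)) := by
        apply Real.exp_le_exp.mpr; nlinarith
      have e2 : b ^ (-β) ≤ (r/2) ^ (-β) :=
        Real.rpow_le_rpow_of_nonpos hr2 hb2 (by linarith)
      calc Real.exp (-ν*a) * a ^ (-α) * (Real.exp (-ν*b) * b ^ (-β))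
          ≤ Real.exp (-ν*a) * a ^ (-α) * (Real.exp (-ν*(r-a)) * ((r/2) ^ (-β))) := by
            apply mul_le_mul_of_nonneg_left (mul_le_mul e1 e2 (by positivity) (by positivity))
              (by positivity)
        _ = (Real.exp (-ν*a) * Real.exp (-ν*(r-a))) * ((r/2) ^ (-β) * a ^ (-α)) := by ring
        _ = Real.exp (-ν*r) * ((r/2) ^ (-β) * a ^ (-α)) := by
            rw [← Real.exp_add]; congr 1; ring
    calc ENNReal.ofReal (Real.exp (-ν*a) * a ^ (-α) * (Real.exp (-ν*b) * b ^ (-β)))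
        ≤ ENNReal.ofReal (Real.exp (-ν*r)) * ENNReal.ofReal ((r/2) ^ (-β) * a ^ (-α)) := by
          rw [← ENNReal.ofReal_mul (Real.exp_pos _).le]
          exact ENNReal.ofReal_le_ofReal key
      _ ≤ _ := by
          apply mul_le_mul_right
          rw [ht1, if_pos hA]
          exact le_add_right (le_add_right (le_add_right le_rfl))
  · by_cases hB : b ≤ r/2
    · have ha2 : r/2 ≤ a := le_of_not_ge hA
      have key : Real.exp (-ν*a) * a ^ (-α) * (Real.exp (-ν*b) * b ^ (-β))
          ≤ Real.exp (-ν*r) * ((r/2) ^ (-α) * b ^ (-β)) := by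
        have e1 : Real.exp (-ν*a) ≤ Real.exp (-ν*(r-b)) := by
          apply Real.exp_le_exp.mpr; nlinarith
        have e2 : a ^ (-α) ≤ (r/2) ^ (-α) :=
          Real.rpow_le_rpow_of_nonpos hr2 ha2 (by linarith)
        calc Real.exp (-ν*a) * a ^ (-α) * (Real.exp (-ν*b) * b ^ (-β))
            ≤ Real.exp (-ν*(r-b)) * ((r/2) ^ (-α)) * (Real.exp (-ν*b) * b ^ (-β)) := by
              apply mul_le_mul_of_nonneg_right (mul_le_mul e1 e2 (by positivity) (by positivity))
                (by positivity)
          _ = (Real.exp (-ν*(r-b)) * Real.exp (-ν*b)) * ((r/2) ^ (-α) * b ^ (-β)) := by ring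
          _ = Real.exp (-ν*r) * ((r/2) ^ (-α) * b ^ (-β)) := by
              rw [← Real.exp_add]; congr 1; ring
      calc ENNReal.ofReal (Real.exp (-ν*a) * a ^ (-α) * (Real.exp (-ν*b) * b ^ (-β)))
          ≤ ENNReal.ofReal (Real.exp (-ν*r)) * ENNReal.ofReal ((r/2) ^ (-α) * b ^ (-β)) := by
            rw [← ENNReal.ofReal_mul (Real.exp_pos _).le]
            exact ENNReal.ofReal_le_ofReal key
        _ ≤ _ := by
            apply mul_le_mul_right
            rw [ht2, if_pos hB]
            exact le_add_right (le_add_right (le_add_left le_rfl))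
    · have hA' : r/2 < a := lt_of_not_ge hA
      have hB' : r/2 < b := lt_of_not_ge hB
      have ha0 : 0 < a := lt_trans hr2 hA'
      have hb0 : 0 < b := lt_trans hr2 hB'
      rcases le_total a b with hab | hab
      · have key : Real.exp (-ν*a) * a ^ (-α) * (Real.exp (-ν*b) * b ^ (-β))
            ≤ Real.exp (-ν*r) * (Real.exp (ν*r-2*ν*a) * a ^ (-(d:ℝ))) := by
          have e1 : Real.exp (-ν*b) ≤ Real.exp (-ν*a) := by
            apply Real.exp_le_exp.mpr; nlinarith
          have e2 : b ^ (-β) ≤ a ^ (-β) :=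
            Real.rpow_le_rpow_of_nonpos ha0 hab (by linarith)
          have hrhs : Real.exp (-ν*r) * (Real.exp (ν*r-2*ν*a) * a ^ (-(d:ℝ)))
              = Real.exp (-2*ν*a) * a ^ (-(d:ℝ)) := by
            rw [← mul_assoc, ← Real.exp_add]; congr 2; ring
          rw [hrhs]
          have had : a ^ (-α) * a ^ (-β) = a ^ (-(d:ℝ)) := by
            rw [← Real.rpow_add ha0]; congr 1; linarith
          calc Real.exp (-ν*a) * a ^ (-α) * (Real.exp (-ν*b) * b ^ (-β))
              ≤ Real.exp (-ν*a) * a ^ (-α) * (Real.exp (-ν*a) * a ^ (-β)) := by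
                apply mul_le_mul_of_nonneg_left (mul_le_mul e1 e2 (by positivity) (by positivity))
                  (by positivity)
            _ = (Real.exp (-ν*a) * Real.exp (-ν*a)) * (a ^ (-α) * a ^ (-β)) := by ring
            _ = Real.exp (-2*ν*a) * a ^ (-(d:ℝ)) := by
                rw [← Real.exp_add, had]; congr 2; ring
        calc ENNReal.ofReal (Real.exp (-ν*a) * a ^ (-α) * (Real.exp (-ν*b) * b ^ (-β)))
            ≤ ENNReal.ofReal (Real.exp (-ν*r)) *
                ENNReal.ofReal (Real.exp (ν*r-2*ν*a) * a ^ (-(d:ℝ))) := by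
              rw [← ENNReal.ofReal_mul (Real.exp_pos _).le]
              exact ENNReal.ofReal_le_ofReal key
          _ ≤ _ := by
              apply mul_le_mul_right
              rw [ht3, if_pos hA']
              exact le_add_right (le_add_left le_rfl)
      · have key : Real.exp (-ν*a) * a ^ (-α) * (Real.exp (-ν*b) * b ^ (-β))
            ≤ Real.exp (-ν*r) * (Real.exp (ν*r-2*ν*b) * b ^ (-(d:ℝ))) := by
          have e1 : Real.exp (-ν*a) ≤ Real.exp (-ν*b) := by
            apply Real.exp_le_exp.mpr; nlinarith
          have e2 : a ^ (-α) ≤ b ^ (-α) :=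
            Real.rpow_le_rpow_of_nonpos hb0 hab (by linarith)
          have hrhs : Real.exp (-ν*r) * (Real.exp (ν*r-2*ν*b) * b ^ (-(d:ℝ)))
              = Real.exp (-2*ν*b) * b ^ (-(d:ℝ)) := by
            rw [← mul_assoc, ← Real.exp_add]; congr 2; ring
          rw [hrhs]
          have hbd : b ^ (-α) * b ^ (-β) = b ^ (-(d:ℝ)) := by
            rw [← Real.rpow_add hb0]; congr 1; linarith
          calc Real.exp (-ν*a) * a ^ (-α) * (Real.exp (-ν*b) * b ^ (-β))
              ≤ Real.exp (-ν*b) * b ^ (-α) * (Real.exp (-ν*b) * b ^ (-β)) := by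
                apply mul_le_mul_of_nonneg_right (mul_le_mul e1 e2 (by positivity) (by positivity))
                  (by positivity)
            _ = (Real.exp (-ν*b) * Real.exp (-ν*b)) * (b ^ (-α) * b ^ (-β)) := by ring
            _ = Real.exp (-2*ν*b) * b ^ (-(d:ℝ)) := by
                rw [← Real.exp_add, hbd]; congr 2; ring
        calc ENNReal.ofReal (Real.exp (-ν*a) * a ^ (-α) * (Real.exp (-ν*b) * b ^ (-β)))
            ≤ ENNReal.ofReal (Real.exp (-ν*r)) *
                ENNReal.ofReal (Real.exp (ν*r-2*ν*b) * b ^ (-(d:ℝ))) := by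
              rw [← ENNReal.ofReal_mul (Real.exp_pos _).le]
              exact ENNReal.ofReal_le_ofReal key
          _ ≤ _ := by
              apply mul_le_mul_right
              rw [ht4, if_pos hB']
              exact le_add_left le_rfl

theorem convolution_lemma_critical (d : ℕ) (hd : 1 ≤ d) (α β ν : ℝ)
    (hα : 0 < α) (hαd : α < d) (hβ : 0 < β) (hβd : β < d)
    (hαβ : α + β = (d : ℝ)) (hν : 0 < ν) :
    ∃ C > 0, ∀ x y : EuclideanSpace ℝ (Fin d), x ≠ y →
      (∫ z : EuclideanSpace ℝ (Fin d),
          Real.exp (-ν * ‖z - x‖) * ‖z - x‖ ^ (-α) *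
            (Real.exp (-ν * ‖z - y‖) * ‖z - y‖ ^ (-β)))
        ≤ C * Real.exp (-ν * ‖x - y‖) * (|Real.log ‖x - y‖| + 1) := by
  have hlog4 : 0 < Real.log 4 := Real.log_pos (by norm_num)
  set cE : ℝ≥0∞ := (d : ℝ≥0∞) * volume (Metric.ball (0 : EuclideanSpace ℝ (Fin d)) 1) with hcE
  have hcE_top : cE ≠ ⊤ := ENNReal.mul_ne_top (ENNReal.natCast_ne_top d) measure_ball_lt_top.ne
  set cD : ℝ := cE.toReal with hcDdef
  have hcD : ENNReal.ofReal cD = cE := ENNReal.ofReal_toReal hcE_top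
  have hcD0 : 0 ≤ cD := ENNReal.toReal_nonneg
  set M : ℝ := 1/α + 1/β + 2*Real.log 4 + 1/ν + 2 with hM
  have hM2 : 2 ≤ M := by
    have : 0 < 1/α := by positivity
    have : 0 < 1/β := by positivity
    have : 0 < 1/ν := by positivity
    simp only [hM]; linarith
  have hMpos : 0 < M := by linarith
  have hCpos : 0 < cD * M + 1 := by nlinarith
  refine ⟨cD * M + 1, hCpos, fun x y hxy => ?_⟩
  set r : ℝ := ‖x - y‖ with hrdef
  have hr : 0 < r := norm_pos_iff.mpr (sub_ne_zero_of_ne hxy)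
  have hr2 : 0 < r/2 := by linarith
  -- the integrand
  set f : EuclideanSpace ℝ (Fin d) → ℝ := fun z =>
    Real.exp (-ν * ‖z - x‖) * ‖z - x‖ ^ (-α) * (Real.exp (-ν * ‖z - y‖) * ‖z - y‖ ^ (-β))
    with hfdef
  have hf_nonneg : ∀ z, 0 ≤ f z := fun z => by
    simp only [hfdef]; positivity
  have hf_meas : Measurable f := by
    simp only [hfdef]; fun_prop
  rw [show (∫ z : EuclideanSpace ℝ (Fin d),
      Real.exp (-ν * ‖z - x‖) * ‖z - x‖ ^ (-α) *
        (Real.exp (-ν * ‖z - y‖) * ‖z - y‖ ^ (-β))) = ∫ z, f z from rfl,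
    integral_eq_lintegral_of_nonneg_ae (ae_of_all _ hf_nonneg)
      hf_meas.aemeasurable.aestronglyMeasurable]
  have hRHS0 : 0 ≤ (cD * M + 1) * Real.exp (-ν * r) * (|Real.log r| + 1) := by positivity
  apply ENNReal.toReal_le_of_le_ofReal hRHS0
  -- radial pieces
  set φA : ℝ → ℝ≥0∞ := fun t => if t ≤ r/2 then ENNReal.ofReal ((r/2) ^ (-β) * t ^ (-α)) else 0
    with hφAdef
  set φB : ℝ → ℝ≥0∞ := fun t => if t ≤ r/2 then ENNReal.ofReal ((r/2) ^ (-α) * t ^ (-β)) else 0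
    with hφBdef
  set φC : ℝ → ℝ≥0∞ := fun t =>
    if r/2 < t then ENNReal.ofReal (Real.exp (ν*r-2*ν*t) * t ^ (-(d:ℝ))) else 0 with hφCdef
  have hφA : Measurable φA := by
    apply Measurable.ite measurableSet_Iic _ measurable_const
    fun_prop
  have hφB : Measurable φB := by
    apply Measurable.ite measurableSet_Iic _ measurable_const
    fun_prop
  have hφC : Measurable φC := by
    apply Measurable.ite measurableSet_Ioi _ measurable_const
    fun_prop
  have hnx : Measurable fun z : EuclideanSpace ℝ (Fin d) => ‖z - x‖ := by fun_prop
  have hny : Measurable fun z : EuclideanSpace ℝ (Fin d) => ‖z - y‖ := by fun_prop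
  -- translation invariance
  have htrans : ∀ (φ : ℝ → ℝ≥0∞) (v : EuclideanSpace ℝ (Fin d)),
      ∫⁻ z : EuclideanSpace ℝ (Fin d), φ ‖z - v‖ = ∫⁻ w : EuclideanSpace ℝ (Fin d), φ ‖w‖ := by
    intro φ v
    have := lintegral_add_right_eq_self (μ := volume) (fun w : EuclideanSpace ℝ (Fin d) => φ ‖w‖) (-v)
    simpa [sub_eq_add_neg] using this
  -- step 1: pointwise bound
  have step1 : ∫⁻ z, ENNReal.ofReal (f z) ≤
      ENNReal.ofReal (Real.exp (-ν*r)) *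
        ((∫⁻ z, φA ‖z - x‖) + (∫⁻ z, φB ‖z - y‖) + (∫⁻ z, φC ‖z - x‖) + (∫⁻ z, φC ‖z - y‖)) := by
    have hmono : ∫⁻ z, ENNReal.ofReal (f z) ≤
        ∫⁻ z, ENNReal.ofReal (Real.exp (-ν*r)) *
          (φA ‖z - x‖ + φB ‖z - y‖ + φC ‖z - x‖ + φC ‖z - y‖) := by
      apply lintegral_mono
      intro z
      have htri : r ≤ ‖z - x‖ + ‖z - y‖ := by
        have h1 : x - y = (z - y) - (z - x) := by abel
        calc r = ‖(z - y) - (z - x)‖ := by rw [hrdef, h1]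
          _ ≤ ‖z - y‖ + ‖z - x‖ := norm_sub_le _ _
          _ = ‖z - x‖ + ‖z - y‖ := by ring
      exact pointwise_bound hα hβ hαβ hν hr (norm_nonneg _) (norm_nonneg _) htri
    rw [lintegral_const_mul' _ _ ENNReal.ofReal_ne_top] at hmono
    rw [lintegral_add_right _
        (show Measurable fun z : EuclideanSpace ℝ (Fin d) => φC ‖z - y‖ from hφC.comp hny),
      lintegral_add_right _
        (show Measurable fun z : EuclideanSpace ℝ (Fin d) => φC ‖z - x‖ from hφC.comp hnx),
      lintegral_add_right _
        (show Measurable fun z : EuclideanSpace ℝ (Fin d) => φB ‖z - y‖ from hφB.comp hny)] at hmono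
    exact hmono
  -- step 2: evaluate each piece
  have hA : (∫⁻ z, φA ‖z - x‖) = cE * ENNReal.ofReal (1/β) := by
    rw [htrans φA x, lintegral_norm_eq d hd φA hφA]
    congr 1
    rw [hφAdef]
    rw [oned_A hd hα hβ hαβ hr2, ← ENNReal.ofReal_mul (by positivity)]
    congr 1
    rw [mul_div_assoc', ← Real.rpow_add hr2]
    norm_num
  have hB : (∫⁻ z, φB ‖z - y‖) = cE * ENNReal.ofReal (1/α) := by
    rw [htrans φB y, lintegral_norm_eq d hd φB hφB]
    congr 1
    rw [hφBdef]
    rw [oned_A hd hβ hα (by linarith) hr2, ← ENNReal.ofReal_mul (by positivity)]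
    congr 1
    rw [mul_div_assoc', ← Real.rpow_add hr2]
    norm_num
  have hC : ∀ v : EuclideanSpace ℝ (Fin d), (∫⁻ z, φC ‖z - v‖) ≤
      cE * (ENNReal.ofReal (Real.log 4 + |Real.log r|) + ENNReal.ofReal (1/(2*ν))) := by
    intro v
    rw [htrans φC v, lintegral_norm_eq d hd φC hφC]
    apply mul_le_mul_right
    rw [hφCdef]
    exact oned_C hd hr hν
  -- step 3: assemble
  calc ∫⁻ z, ENNReal.ofReal (f z)
      ≤ ENNReal.ofReal (Real.exp (-ν*r)) *
        ((∫⁻ z, φA ‖z - x‖) + (∫⁻ z, φB ‖z - y‖) + (∫⁻ z, φC ‖z - x‖) + (∫⁻ z, φC ‖z - y‖)) :=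
        step1
    _ ≤ ENNReal.ofReal (Real.exp (-ν*r)) *
        (cE * ENNReal.ofReal (1/β) + cE * ENNReal.ofReal (1/α)
          + cE * (ENNReal.ofReal (Real.log 4 + |Real.log r|) + ENNReal.ofReal (1/(2*ν)))
          + cE * (ENNReal.ofReal (Real.log 4 + |Real.log r|) + ENNReal.ofReal (1/(2*ν)))) := by
        gcongr
        · exact hA.le
        · exact hB.le
        · exact hC x
        · exact hC y
    _ = ENNReal.ofReal (Real.exp (-ν*r)) * cE *
        (ENNReal.ofReal (1/β) + ENNReal.ofReal (1/α)
          + (ENNReal.ofReal (Real.log 4 + |Real.log r|) + ENNReal.ofReal (1/(2*ν)))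
          + (ENNReal.ofReal (Real.log 4 + |Real.log r|) + ENNReal.ofReal (1/(2*ν)))) := by
        ring
    _ ≤ ENNReal.ofReal (Real.exp (-ν*r)) * cE * ENNReal.ofReal (M * (|Real.log r| + 1)) := by
        apply mul_le_mul_right
        rw [← ENNReal.ofReal_add (by positivity) (by positivity),
          ← ENNReal.ofReal_add (by positivity) (by positivity),
          ← ENNReal.ofReal_add (by positivity) (by positivity),
          ← ENNReal.ofReal_add (by positivity) (by positivity)]
        apply ENNReal.ofReal_le_ofReal
        have habs : 0 ≤ |Real.log r| := abs_nonneg _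
        have hνν : 1/(2*ν) + 1/(2*ν) = 1/ν := by field_simp; norm_num
        have hX : 0 ≤ 1/α + 1/β + 2*Real.log 4 + 1/ν := by
          have h1 : 0 < 1/α := by positivity
          have h2 : 0 < 1/β := by positivity
          have h3 : 0 < 1/ν := by positivity
          linarith
        simp only [hM]
        nlinarith [mul_nonneg hX habs, hνν]
    _ ≤ ENNReal.ofReal ((cD * M + 1) * Real.exp (-ν * r) * (|Real.log r| + 1)) := by
        rw [← hcD, ← ENNReal.ofReal_mul (Real.exp_pos _).le,
          ← ENNReal.ofReal_mul (by positivity)]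
        apply ENNReal.ofReal_le_ofReal
        have h1 : 0 ≤ Real.exp (-ν*r) * (|Real.log r| + 1) := by positivity
        nlinarith [h1, Real.exp_pos (-ν*r), abs_nonneg (Real.log r), hcD0, hMpos]
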